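/- arXiv:1310.6855 — 8 statements merged into one kernel-verified Lean document; each statement's English description precedes it below -/
import Mathlib

section
/- For every integer k ≥ 2, all real numbers t₀, …, t_{k+1}, all pairwise distinct indices i, j, l ∈ {0,…,k} and every t ∈ ℝ, one has the polynomial identity (T_i(t) − T_j(t))·T_l(t) = (t_j − t_i)·(t_{k+1} − t_l)·P_{ijl}(t), where P_{ijl}(t) = (t − t_i)(t − t_j)(t − t_l)(t − t_{k+1})·∏_{s ∈ {0,…,k}\{i,j,l}} (t − t_s)². Consequently, since P_{ijl} is invariant under permutations of (i,j,l), for any real numbers c_{ij} = c_{ji}, c_{jl} = c_{lj}, c_{li} = c_{il} and d_i, d_j, d_l one has Σ_{cycl(i,j,l)} (T_i(t) − T_j(t))·T_l(t)·c_{ij}·d_l = −P_{ijl}(t)·Σ_{cycl(i,j,l)} (t_i − t_j)(t_{k+1} − t_l)·c_{ij}·d_l for all t ∈ ℝ. -/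
/-! Write `x_m = t - t_m`, `u = t_{k+1}` and `Q = ∏_{s ∉ {i,j,l}} x_s`. Then
`T_i = (u - t_i) x_j x_l Q`, `T_j = (u - t_j) x_i x_l Q`, `T_l = (u - t_l) x_i x_j Q`, and
`(u - t_i) x_j - (u - t_j) x_i = (t_j - t_i)(t - u)`, so `(T_i - T_j) T_l` is
`(t_j - t_i)(u - t_l) x_i x_j x_l (t - u) Q²`. Both claims are then ring identities. -/

open Finset

theorem Finset.prod_erase_eq_prod_erase_mul_prod_sdiff {ι M : Type*} [DecidableEq ι]
    [CommMonoid M] {S U : Finset ι} {a : ι} (hUS : U ⊆ S) (ha : a ∈ U) (f : ι → M) :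
    ∏ s ∈ S.erase a, f s = (∏ s ∈ U.erase a, f s) * ∏ s ∈ S \ U, f s := by
  rw [← prod_sdiff (erase_subset_erase a hUS), mul_comm]
  congr 2
  ext x
  by_cases hx : x = a <;> simp [hx, ha]

theorem cyclic_polynomial_identity_general
    (k : ℕ) (ts : ℕ → ℝ)
    (i j l : ℕ) (hi : i ≤ k) (hj : j ≤ k) (hl : l ≤ k)
    (hij : i ≠ j) (hjl : j ≠ l) (hil : i ≠ l)
    (T : ℕ → ℝ → ℝ)
    (hT : ∀ m t, T m t =
      (ts (k+1) - ts m) * ∏ s ∈ (Finset.range (k+1)).erase m, (t - ts s))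
    (P : ℝ → ℝ)
    (hP : ∀ t, P t = (t - ts i) * (t - ts j) * (t - ts l) * (t - ts (k+1)) *
      ∏ s ∈ (Finset.range (k+1)) \ {i, j, l}, (t - ts s)^2)
    (cij cjl cli di dj dl : ℝ) :
    (∀ t : ℝ, (T i t - T j t) * T l t = (ts j - ts i) * (ts (k+1) - ts l) * P t) ∧
    (∀ t : ℝ,
      (T i t - T j t) * T l t * cij * dl
        + (T j t - T l t) * T i t * cjl * di
        + (T l t - T i t) * T j t * cli * dj
      = -(P t) *
        ((ts i - ts j) * (ts (k+1) - ts l) * cij * dl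
          + (ts j - ts l) * (ts (k+1) - ts i) * cjl * di
          + (ts l - ts i) * (ts (k+1) - ts j) * cli * dj)) := by
  have hU : ({i, j, l} : Finset ℕ) ⊆ range (k+1) := by
    simp only [insert_subset_iff, singleton_subset_iff, mem_range]
    omega
  have factor : ∀ m ∈ ({i, j, l} : Finset ℕ), ∀ t, T m t = (ts (k+1) - ts m) *
      ((∏ s ∈ ({i, j, l} : Finset ℕ).erase m, (t - ts s)) *
        ∏ s ∈ range (k+1) \ {i, j, l}, (t - ts s)) := fun m hm t => by
    rw [hT, prod_erase_eq_prod_erase_mul_prod_sdiff hU hm]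
  have hTi := factor i (by simp)
  have hTj := factor j (by simp)
  have hTl := factor l (by simp)
  simp only [ne_eq, hij, hjl, hil, hij.symm, not_false_eq_true,
    erase_insert_eq_erase, erase_insert_of_ne, erase_singleton, erase_eq_of_notMem, mem_singleton,
    insert_empty, prod_pair] at hTi hTj hTl
  simp only [prod_pow] at hP
  constructor <;> intro t <;> rw [hTi, hTj, hTl, hP] <;> ring

/-- The key polynomial identity behind Theorem 10.1:
`(T_i(t) − T_j(t))·T_l(t) = (t_j − t_i)(t_{k+1} − t_l)·P_{ijl}(t)`, and its consequence
for cyclic sums with symmetric coefficients `c` and arbitrary `d`. -/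
theorem cyclic_polynomial_identity
    (k : ℕ) (hk : 2 ≤ k) (ts : ℕ → ℝ)
    (i j l : ℕ) (hi : i ≤ k) (hj : j ≤ k) (hl : l ≤ k)
    (hij : i ≠ j) (hjl : j ≠ l) (hil : i ≠ l)
    (T : ℕ → ℝ → ℝ)
    (hT : ∀ m t, T m t =
      (ts (k+1) - ts m) * ∏ s ∈ (Finset.range (k+1)).erase m, (t - ts s))
    (P : ℝ → ℝ)
    (hP : ∀ t, P t = (t - ts i) * (t - ts j) * (t - ts l) * (t - ts (k+1)) *
      ∏ s ∈ (Finset.range (k+1)) \ {i, j, l}, (t - ts s)^2)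
    (cij cjl cli di dj dl : ℝ) :
    (∀ t : ℝ, (T i t - T j t) * T l t = (ts j - ts i) * (ts (k+1) - ts l) * P t) ∧
    (∀ t : ℝ,
      (T i t - T j t) * T l t * cij * dl
        + (T j t - T l t) * T i t * cjl * di
        + (T l t - T i t) * T j t * cli * dj
      = -(P t) *
        ((ts i - ts j) * (ts (k+1) - ts l) * cij * dl
          + (ts j - ts l) * (ts (k+1) - ts i) * cjl * di
          + (ts l - ts i) * (ts (k+1) - ts j) * cli * dj)) :=
  cyclic_polynomial_identity_general k ts i j l hi hj hl hij hjl hil T hT P hP cij cjl cli di dj dl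
end

section
/- Let k ≥ 2, let t₀, …, t_{k+1} be pairwise distinct real numbers, let U ⊆ ℝ^{k+1} be open and let w : U → ℝ be smooth. Then the following are equivalent: (a) for every t ∈ ℝ the integrability condition E(t) holds, i.e. for every x ∈ U and all 0 ≤ i < j < l ≤ k, Σ_{cycl(i,j,l)} (T_i(t) − T_j(t))·T_l(t)·∂_i∂_j w(x)·∂_l w(x) = 0; (b) w satisfies the Hirota-type system: for every x ∈ U and all 0 ≤ i < j < l ≤ k, Σ_{cycl(i,j,l)} (t_i − t_j)(t_{k+1} − t_l)·∂_i∂_j w(x)·∂_l w(x) = 0. -/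
open Finset

/-- Partial derivative in the `i`-th coordinate direction on `ℝⁿ = (Fin n → ℝ)`. -/
noncomputable def pd {n : ℕ} (i : Fin n) (f : (Fin n → ℝ) → ℝ) : (Fin n → ℝ) → ℝ :=
  fun x => fderiv ℝ f x (Pi.single i 1)

lemma erase3 {k : ℕ} (f : ℕ → ℝ) (a b c : ℕ) (hb : b < k+1) (hc : c < k+1)
    (hab : a ≠ b) (hbc : b ≠ c) (hac : a ≠ c) :
    ∏ s ∈ (Finset.range (k+1)).erase a, f s
      = f b * (f c * ∏ s ∈ Finset.range (k+1) \ {a, b, c}, f s) := by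
  have hbmem : b ∈ (Finset.range (k+1)).erase a :=
    Finset.mem_erase.mpr ⟨Ne.symm hab, Finset.mem_range.mpr hb⟩
  have hcmem : c ∈ ((Finset.range (k+1)).erase a).erase b :=
    Finset.mem_erase.mpr ⟨Ne.symm hbc,
      Finset.mem_erase.mpr ⟨Ne.symm hac, Finset.mem_range.mpr hc⟩⟩
  rw [← Finset.mul_prod_erase _ f hbmem, ← Finset.mul_prod_erase _ f hcmem]
  have hset : (((Finset.range (k+1)).erase a).erase b).erase c
      = Finset.range (k+1) \ {a, b, c} := by
    ext s
    simp only [Finset.mem_erase, Finset.mem_sdiff, Finset.mem_range,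
      Finset.mem_insert, Finset.mem_singleton]
    tauto
  rw [hset]

lemma key_identity {k : ℕ} (ts : ℕ → ℝ) (T : ℕ → ℝ → ℝ)
    (hT : ∀ m t, T m t =
      (ts (k+1) - ts m) * ∏ s ∈ (Finset.range (k+1)).erase m, (t - ts s))
    (i j l : ℕ) (hi : i < k+1) (hj : j < k+1) (hl : l < k+1)
    (hij : i ≠ j) (hjl : j ≠ l) (hil : i ≠ l) (t : ℝ) :
    (T i t - T j t) * T l t = (ts i - ts j) * (ts (k+1) - ts l) *
      ((ts (k+1) - t) * (∏ s ∈ Finset.range (k+1), (t - ts s)) *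
        ∏ s ∈ Finset.range (k+1) \ {i, j, l}, (t - ts s)) := by
  have e1 : ({j, i, l} : Finset ℕ) = {i, j, l} := by
    ext s; simp only [Finset.mem_insert, Finset.mem_singleton]; tauto
  have e2 : ({l, i, j} : Finset ℕ) = {i, j, l} := by
    ext s; simp only [Finset.mem_insert, Finset.mem_singleton]; tauto
  have Ki := erase3 (fun s => t - ts s) i j l hj hl hij hjl hil
  have Kj := erase3 (fun s => t - ts s) j i l hi hl (Ne.symm hij) hil hjl
  have Kl := erase3 (fun s => t - ts s) l i j hi hj (Ne.symm hil) hij (Ne.symm hjl)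
  rw [e1] at Kj
  rw [e2] at Kl
  have KA : ∏ s ∈ Finset.range (k+1), (t - ts s)
      = (t - ts i) * ((t - ts j) * ((t - ts l) *
        ∏ s ∈ Finset.range (k+1) \ {i, j, l}, (t - ts s))) := by
    rw [← Finset.mul_prod_erase _ (fun s => t - ts s) (Finset.mem_range.mpr hi), Ki]
  rw [hT, hT, hT, Ki, Kj, Kl, KA]
  ring

/-- Theorem 10.1, first part, coordinate form.
For a smooth function `w` on an open set `U ⊆ ℝ^{k+1}` and pairwise distinct parameters
`t₀, …, t_{k+1}`, the integrability condition `E(t)` holds for every `t ∈ ℝ` if and only if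
`w` satisfies the Hirota-type system. -/
theorem integrability_iff_hirota
    (k : ℕ) (hk : 2 ≤ k) (ts : ℕ → ℝ)
    (hts : ∀ i j, i ≤ k + 1 → j ≤ k + 1 → i ≠ j → ts i ≠ ts j)
    (U : Set (Fin (k+1) → ℝ)) (hU : IsOpen U)
    (w : (Fin (k+1) → ℝ) → ℝ) (hw : ContDiffOn ℝ (⊤ : ℕ∞) w U)
    (T : ℕ → ℝ → ℝ)
    (hT : ∀ m t, T m t =
      (ts (k+1) - ts m) * ∏ s ∈ (Finset.range (k+1)).erase m, (t - ts s)) :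
    (∀ t : ℝ, ∀ x ∈ U, ∀ i j l : Fin (k+1), (i : ℕ) < j → (j : ℕ) < l →
      (T i t - T j t) * T l t * pd i (pd j w) x * pd l w x
        + (T j t - T l t) * T i t * pd j (pd l w) x * pd i w x
        + (T l t - T i t) * T j t * pd l (pd i w) x * pd j w x = 0)
    ↔
    (∀ x ∈ U, ∀ i j l : Fin (k+1), (i : ℕ) < j → (j : ℕ) < l →
      (ts i - ts j) * (ts (k+1) - ts l) * pd i (pd j w) x * pd l w x
        + (ts j - ts l) * (ts (k+1) - ts i) * pd j (pd l w) x * pd i w x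
        + (ts l - ts i) * (ts (k+1) - ts j) * pd l (pd i w) x * pd j w x = 0) := by
  constructor
  · intro hE x hx i j l hij hjl
    -- choose a large t
    set M : ℝ := Finset.sum (Finset.range (k+2)) (fun s => |ts s|) with hM
    have hMle : ∀ s, s < k+2 → ts s ≤ M := by
      intro s hs
      refine le_trans (le_abs_self _) ?_
      exact Finset.single_le_sum (f := fun s => |ts s|) (fun _ _ => abs_nonneg _) (Finset.mem_range.mpr hs)
    set t0 : ℝ := M + 1 with ht0
    have hne : (i : ℕ) ≠ j := Nat.ne_of_lt hij
    have hne' : (j : ℕ) ≠ l := Nat.ne_of_lt hjl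
    have hne'' : (i : ℕ) ≠ l := Nat.ne_of_lt (lt_trans hij hjl)
    have h := hE t0 x hx i j l hij hjl
    rw [key_identity ts T hT i j l i.isLt j.isLt l.isLt hne hne' hne'' t0,
        key_identity ts T hT j l i j.isLt l.isLt i.isLt hne' (Ne.symm hne'') (Ne.symm hne) t0,
        key_identity ts T hT l i j l.isLt i.isLt j.isLt (Ne.symm hne'') hne (Ne.symm hne') t0]
      at h
    have e1 : ({(j:ℕ), (l:ℕ), (i:ℕ)} : Finset ℕ) = {(i:ℕ), (j:ℕ), (l:ℕ)} := by
      ext s; simp only [Finset.mem_insert, Finset.mem_singleton]; tauto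
    have e2 : ({(l:ℕ), (i:ℕ), (j:ℕ)} : Finset ℕ) = {(i:ℕ), (j:ℕ), (l:ℕ)} := by
      ext s; simp only [Finset.mem_insert, Finset.mem_singleton]; tauto
    rw [e1, e2] at h
    set P1 : ℝ := ∏ s ∈ Finset.range (k+1), (t0 - ts s) with hP1
    set P2 : ℝ := ∏ s ∈ Finset.range (k+1) \ {(i:ℕ), (j:ℕ), (l:ℕ)}, (t0 - ts s) with hP2
    have hP1pos : 0 < P1 := by
      apply Finset.prod_pos
      intro s hs
      have := hMle s (by have := Finset.mem_range.mp hs; omega)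
      simp only [ht0]; linarith
    have hP2pos : 0 < P2 := by
      apply Finset.prod_pos
      intro s hs
      have hs' := (Finset.mem_sdiff.mp hs).1
      have := hMle s (by have := Finset.mem_range.mp hs'; omega)
      simp only [ht0]; linarith
    have hneg : ts (k+1) - t0 < 0 := by
      have := hMle (k+1) (by omega)
      simp only [ht0]; linarith
    have hc : (ts (k+1) - t0) * P1 * P2 ≠ 0 :=
      ne_of_lt (mul_neg_of_neg_of_pos (mul_neg_of_neg_of_pos hneg hP1pos) hP2pos)
    have h2 : ((ts (k+1) - t0) * P1 * P2) *
        ((ts i - ts j) * (ts (k+1) - ts l) * pd i (pd j w) x * pd l w x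
          + (ts j - ts l) * (ts (k+1) - ts i) * pd j (pd l w) x * pd i w x
          + (ts l - ts i) * (ts (k+1) - ts j) * pd l (pd i w) x * pd j w x) = 0 := by
      linear_combination h
    rcases mul_eq_zero.mp h2 with h3 | h3
    · exact absurd h3 hc
    · exact h3
  · intro hH t x hx i j l hij hjl
    have hne : (i : ℕ) ≠ j := Nat.ne_of_lt hij
    have hne' : (j : ℕ) ≠ l := Nat.ne_of_lt hjl
    have hne'' : (i : ℕ) ≠ l := Nat.ne_of_lt (lt_trans hij hjl)
    have e1 : ({(j:ℕ), (l:ℕ), (i:ℕ)} : Finset ℕ) = {(i:ℕ), (j:ℕ), (l:ℕ)} := by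
      ext s; simp only [Finset.mem_insert, Finset.mem_singleton]; tauto
    have e2 : ({(l:ℕ), (i:ℕ), (j:ℕ)} : Finset ℕ) = {(i:ℕ), (j:ℕ), (l:ℕ)} := by
      ext s; simp only [Finset.mem_insert, Finset.mem_singleton]; tauto
    have K1 := key_identity ts T hT i j l i.isLt j.isLt l.isLt hne hne' hne'' t
    have K2 := key_identity ts T hT j l i j.isLt l.isLt i.isLt hne' (Ne.symm hne'') (Ne.symm hne) t
    have K3 := key_identity ts T hT l i j l.isLt i.isLt j.isLt (Ne.symm hne'') hne (Ne.symm hne') t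
    rw [e1] at K2
    rw [e2] at K3
    rw [K1, K2, K3]
    have h := hH x hx i j l hij hjl
    linear_combination ((ts (k+1) - t) * (∏ s ∈ Finset.range (k+1), (t - ts s)) *
      ∏ s ∈ Finset.range (k+1) \ {(i:ℕ), (j:ℕ), (l:ℕ)}, (t - ts s)) * h
end

section
/- (Zakharevich conjecture, coordinate form.) Let k ≥ 2, let t₀, …, t_{k+1} be pairwise distinct real numbers, let U ⊆ ℝ^{k+1} be open and let w : U → ℝ be smooth. If there exist k + 3 pairwise distinct real numbers s₁, …, s_{k+3} such that the integrability condition E(s_m) holds for every m = 1, …, k+3, then E(t) holds for every t ∈ ℝ. -/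
open Finset

/-- Symmetry of second partial derivatives for a function smooth on an open set. -/
lemma pd_symm {n : ℕ} {U : Set (Fin n → ℝ)} (hU : IsOpen U) {w : (Fin n → ℝ) → ℝ}
    (hw : ContDiffOn ℝ (⊤ : ℕ∞) w U) {x : Fin n → ℝ} (hx : x ∈ U) (a b : Fin n) :
    pd a (pd b w) x = pd b (pd a w) x := by
  have hev : ∀ᶠ y in nhds x, HasFDerivAt w (fderiv ℝ w y) y := by
    filter_upwards [hU.mem_nhds hx] with y hy
    exact ((hw.contDiffAt (hU.mem_nhds hy)).differentiableAt (by simp)).hasFDerivAt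
  have h2 : ContDiffAt ℝ 1 (fderiv ℝ w) x :=
    (hw.contDiffAt (hU.mem_nhds hx)).fderiv_right (WithTop.coe_le_coe.mpr le_top)
  have h3 : HasFDerivAt (fderiv ℝ w) (fderiv ℝ (fderiv ℝ w) x) x :=
    (h2.differentiableAt one_ne_zero).hasFDerivAt
  have hsym := second_derivative_symmetric_of_eventually hev h3 (Pi.single a 1) (Pi.single b 1)
  have hfd : ∀ (v : Fin n → ℝ), HasFDerivAt (fun y => fderiv ℝ w y v)
      ((ContinuousLinearMap.apply ℝ ℝ v).comp (fderiv ℝ (fderiv ℝ w) x)) x :=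
    fun v => (ContinuousLinearMap.apply ℝ ℝ v).hasFDerivAt.comp x h3
  show fderiv ℝ (fun y => fderiv ℝ w y (Pi.single b 1)) x (Pi.single a 1)
     = fderiv ℝ (fun y => fderiv ℝ w y (Pi.single a 1)) x (Pi.single b 1)
  rw [(hfd (Pi.single b 1)).fderiv, (hfd (Pi.single a 1)).fderiv]
  simpa using hsym

/-- The key algebraic lemma. -/
lemma zak_alg (t τ ti tj tl tk1 Rt Rτ W Aij Ajl Ali Bi Bj Bl θi θj θl ui uj ul vi vj vl : ℝ)
    (hui : ui = (tk1 - ti) * ((τ - tj) * ((τ - tl) * Rτ)))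
    (huj : uj = (tk1 - tj) * ((τ - ti) * ((τ - tl) * Rτ)))
    (hul : ul = (tk1 - tl) * ((τ - ti) * ((τ - tj) * Rτ)))
    (hvi : vi = (tk1 - ti) * ((t - tj) * ((t - tl) * Rt)))
    (hvj : vj = (tk1 - tj) * ((t - ti) * ((t - tl) * Rt)))
    (hvl : vl = (tk1 - tl) * ((t - ti) * ((t - tj) * Rt)))
    (hD1 : tj - ti ≠ 0) (hD2 : tl - tj ≠ 0) (hD3 : ti - tl ≠ 0)
    (hP1 : τ - ti ≠ 0) (hP2 : τ - tj ≠ 0) (hP3 : τ - tl ≠ 0)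
    (hP4 : τ - tk1 ≠ 0) (hRτ : Rτ ≠ 0) (hW : W ≠ 0)
    (e1 : (ui - uj) * Aij * W = ui * Bi * θj - uj * Bj * θi)
    (e2 : (uj - ul) * Ajl * W = uj * Bj * θl - ul * Bl * θj)
    (e3 : (ul - ui) * Ali * W = ul * Bl * θi - ui * Bi * θl) :
    (vi - vj) * vl * Aij * Bl + (vj - vl) * vi * Ajl * Bi + (vl - vi) * vj * Ali * Bj = 0 := by
  subst hui huj hul hvi hvj hvl
  have f1 : (tk1 - ti) * ((τ - tj) * ((τ - tl) * Rτ)) - (tk1 - tj) * ((τ - ti) * ((τ - tl) * Rτ))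
      = (tj - ti) * ((τ - tk1) * ((τ - tl) * Rτ)) := by ring
  have f2 : (tk1 - tj) * ((τ - ti) * ((τ - tl) * Rτ)) - (tk1 - tl) * ((τ - ti) * ((τ - tj) * Rτ))
      = (tl - tj) * ((τ - tk1) * ((τ - ti) * Rτ)) := by ring
  have f3 : (tk1 - tl) * ((τ - ti) * ((τ - tj) * Rτ)) - (tk1 - ti) * ((τ - tj) * ((τ - tl) * Rτ))
      = (ti - tl) * ((τ - tk1) * ((τ - tj) * Rτ)) := by ring
  have g1 : (tk1 - ti) * ((t - tj) * ((t - tl) * Rt)) - (tk1 - tj) * ((t - ti) * ((t - tl) * Rt))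
      = (tj - ti) * ((t - tk1) * ((t - tl) * Rt)) := by ring
  have g2 : (tk1 - tj) * ((t - ti) * ((t - tl) * Rt)) - (tk1 - tl) * ((t - ti) * ((t - tj) * Rt))
      = (tl - tj) * ((t - tk1) * ((t - ti) * Rt)) := by ring
  have g3 : (tk1 - tl) * ((t - ti) * ((t - tj) * Rt)) - (tk1 - ti) * ((t - tj) * ((t - tl) * Rt))
      = (ti - tl) * ((t - tk1) * ((t - tj) * Rt)) := by ring
  have A1 : (tk1 - ti) * ((τ - tj) * ((τ - tl) * Rτ)) * Bi * θj
        - (tk1 - tj) * ((τ - ti) * ((τ - tl) * Rτ)) * Bj * θi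
      = Rτ * ((τ - tl) * (((tk1 - ti) * Bi) * ((τ - tj) * θj)
        - ((tk1 - tj) * Bj) * ((τ - ti) * θi))) := by ring
  have A2 : (tk1 - tj) * ((τ - ti) * ((τ - tl) * Rτ)) * Bj * θl
        - (tk1 - tl) * ((τ - ti) * ((τ - tj) * Rτ)) * Bl * θj
      = Rτ * ((τ - ti) * (((tk1 - tj) * Bj) * ((τ - tl) * θl)
        - ((tk1 - tl) * Bl) * ((τ - tj) * θj))) := by ring
  have A3 : (tk1 - tl) * ((τ - ti) * ((τ - tj) * Rτ)) * Bl * θi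
        - (tk1 - ti) * ((τ - tj) * ((τ - tl) * Rτ)) * Bi * θl
      = Rτ * ((τ - tj) * (((tk1 - tl) * Bl) * ((τ - ti) * θi)
        - ((tk1 - ti) * Bi) * ((τ - tl) * θl))) := by ring
  rw [f1, A1] at e1
  rw [f2, A2] at e2
  rw [f3, A3] at e3
  rw [g1, g2, g3]
  set P1 := τ - ti with hp1
  set P2 := τ - tj with hp2
  set P3 := τ - tl with hp3
  set P4 := τ - tk1 with hp4
  set Q1 := t - ti with hq1
  set Q2 := t - tj with hq2
  set Q3 := t - tl with hq3
  set Q4 := t - tk1 with hq4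
  set D1 := tj - ti with hd1
  set D2 := tl - tj with hd2
  set D3 := ti - tl with hd3
  set C1 := tk1 - ti with hc1
  set C2 := tk1 - tj with hc2
  set C3 := tk1 - tl with hc3
  clear f1 f2 f3 g1 g2 g3 A1 A2 A3
  clear_value P1 P2 P3 P4 Q1 Q2 Q3 Q4 D1 D2 D3 C1 C2 C3
  have hM : D1 * (P4 * (P3 * Rτ)) * (D2 * (P4 * (P1 * Rτ))) * (D3 * (P4 * (P2 * Rτ))) * W ≠ 0 :=
    mul_ne_zero (mul_ne_zero (mul_ne_zero
      (mul_ne_zero hD1 (mul_ne_zero hP4 (mul_ne_zero hP3 hRτ)))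
      (mul_ne_zero hD2 (mul_ne_zero hP4 (mul_ne_zero hP1 hRτ))))
      (mul_ne_zero hD3 (mul_ne_zero hP4 (mul_ne_zero hP2 hRτ)))) hW
  have key : D1 * (P4 * (P3 * Rτ)) * (D2 * (P4 * (P1 * Rτ))) * (D3 * (P4 * (P2 * Rτ))) * W *
      (D1 * (Q4 * (Q3 * Rt)) * (C3 * (Q1 * (Q2 * Rt))) * Aij * Bl
        + D2 * (Q4 * (Q1 * Rt)) * (C1 * (Q2 * (Q3 * Rt))) * Ajl * Bi
        + D3 * (Q4 * (Q2 * Rt)) * (C2 * (Q1 * (Q3 * Rt))) * Ali * Bj) = 0 := by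
    linear_combination
      ((D2 * (P4 * (P1 * Rτ))) * ((D3 * (P4 * (P2 * Rτ))) *
        (D1 * (Q4 * (Q3 * Rt)) * (C3 * (Q1 * (Q2 * Rt))) * Bl))) * e1
      + ((D1 * (P4 * (P3 * Rτ))) * ((D3 * (P4 * (P2 * Rτ))) *
        (D2 * (Q4 * (Q1 * Rt)) * (C1 * (Q2 * (Q3 * Rt))) * Bi))) * e2
      + ((D1 * (P4 * (P3 * Rτ))) * ((D2 * (P4 * (P1 * Rτ))) *
        (D3 * (Q4 * (Q2 * Rt)) * (C2 * (Q1 * (Q3 * Rt))) * Bj))) * e3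
  exact (mul_eq_zero.mp key).resolve_left hM

/-- Zakharevich conjecture, coordinate form, Corollary 10.5.
If the integrability condition `E(s_m)` holds for `k + 3` pairwise distinct values
`s₁, …, s_{k+3}`, then `E(t)` holds for every `t ∈ ℝ`. -/
theorem zakharevich_conjecture
    (k : ℕ) (hk : 2 ≤ k) (ts : ℕ → ℝ)
    (hts : ∀ i j, i ≤ k + 1 → j ≤ k + 1 → i ≠ j → ts i ≠ ts j)
    (U : Set (Fin (k+1) → ℝ)) (hU : IsOpen U)
    (w : (Fin (k+1) → ℝ) → ℝ) (hw : ContDiffOn ℝ (⊤ : ℕ∞) w U)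
    (T : ℕ → ℝ → ℝ)
    (hT : ∀ m t, T m t =
      (ts (k+1) - ts m) * ∏ s ∈ (Finset.range (k+1)).erase m, (t - ts s))
    (sv : Fin (k+3) → ℝ) (hsv : Function.Injective sv)
    (hE : ∀ m : Fin (k+3), ∀ x ∈ U, ∀ i j l : Fin (k+1), (i : ℕ) < j → (j : ℕ) < l →
      (T i (sv m) - T j (sv m)) * T l (sv m) * pd i (pd j w) x * pd l w x
        + (T j (sv m) - T l (sv m)) * T i (sv m) * pd j (pd l w) x * pd i w x
        + (T l (sv m) - T i (sv m)) * T j (sv m) * pd l (pd i w) x * pd j w x = 0) :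
    ∀ t : ℝ, ∀ x ∈ U, ∀ i j l : Fin (k+1), (i : ℕ) < j → (j : ℕ) < l →
      (T i t - T j t) * T l t * pd i (pd j w) x * pd l w x
        + (T j t - T l t) * T i t * pd j (pd l w) x * pd i w x
        + (T l t - T i t) * T j t * pd l (pd i w) x * pd j w x = 0 := by
  intro t x hx i j l hij hjl
  -- pigeonhole: find a value τ among the `sv` avoiding all the `ts`
  obtain ⟨τ, hτ0, hEτ⟩ : ∃ τ : ℝ, (∀ s : ℕ, s ≤ k + 1 → τ ≠ ts s) ∧
      (∀ a b c : Fin (k+1), (a : ℕ) < b → (b : ℕ) < c →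
        (T a τ - T b τ) * T c τ * pd a (pd b w) x * pd c w x
          + (T b τ - T c τ) * T a τ * pd b (pd c w) x * pd a w x
          + (T c τ - T a τ) * T b τ * pd c (pd a w) x * pd b w x = 0) := by
    have hex : ∃ m : Fin (k+3), ∀ s : ℕ, s ≤ k + 1 → sv m ≠ ts s := by
      by_contra hcon
      push_neg at hcon
      choose f hf1 hf2 using hcon
      have hinj : Function.Injective
          (fun m : Fin (k+3) => (⟨f m, Nat.lt_succ_of_le (hf1 m)⟩ : Fin (k+2))) := by
        intro a b hab
        apply hsv
        rw [hf2 a, hf2 b]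
        have : f a = f b := congrArg Fin.val hab
        rw [this]
      have hcard := Fintype.card_le_of_injective _ hinj
      simp only [Fintype.card_fin] at hcard
      omega
    obtain ⟨m₀, hm₀⟩ := hex
    exact ⟨sv m₀, hm₀, hE m₀ x hx⟩
  -- symmetry of second derivatives
  have hsymm : ∀ a b : Fin (k+1), pd a (pd b w) x = pd b (pd a w) x :=
    fun a b => pd_symm hU hw hx a b
  -- cyclic identity for ALL distinct triples
  have hC : ∀ a b c : Fin (k+1), (a : ℕ) ≠ b → (b : ℕ) ≠ c → (a : ℕ) ≠ c →
      (T a τ - T b τ) * T c τ * pd a (pd b w) x * pd c w x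
        + (T b τ - T c τ) * T a τ * pd b (pd c w) x * pd a w x
        + (T c τ - T a τ) * T b τ * pd c (pd a w) x * pd b w x = 0 := by
    intro a b c hab hbc hac
    rcases Nat.lt_or_ge (a : ℕ) b with h1 | h1' <;>
      rcases Nat.lt_or_ge (b : ℕ) c with h2 | h2' <;>
      rcases Nat.lt_or_ge (a : ℕ) c with h3 | h3'
    · exact hEτ a b c h1 h2
    · omega
    · -- a < b, c < b, a < c : sorted (a, c, b), odd
      have h2 : (c : ℕ) < b := by omega
      have h := hEτ a c b h3 h2
      linear_combination (-1 : ℝ) * h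
        + ((T a τ - T b τ) * T c τ * pd c w x) * hsymm a b
        + ((T b τ - T c τ) * T a τ * pd a w x) * hsymm b c
        + ((T c τ - T a τ) * T b τ * pd b w x) * hsymm c a
    · -- a < b, c < b, c < a : sorted (c, a, b), even
      have h3 : (c : ℕ) < a := by omega
      have h2 : (c : ℕ) < b := by omega
      have h := hEτ c a b h3 h1
      linear_combination h
    · -- b < a, b < c, a < c : sorted (b, a, c), odd
      have h1 : (b : ℕ) < a := by omega
      have h := hEτ b a c h1 h3
      linear_combination (-1 : ℝ) * h
        + ((T a τ - T b τ) * T c τ * pd c w x) * hsymm a b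
        + ((T b τ - T c τ) * T a τ * pd a w x) * hsymm b c
        + ((T c τ - T a τ) * T b τ * pd b w x) * hsymm c a
    · -- b < a, b < c, c < a : sorted (b, c, a), even
      have h1 : (b : ℕ) < a := by omega
      have h3 : (c : ℕ) < a := by omega
      have h := hEτ b c a h2 h3
      linear_combination h
    · omega
    · -- c < b < a : sorted (c, b, a), odd
      have h2 : (c : ℕ) < b := by omega
      have h1 : (b : ℕ) < a := by omega
      have h := hEτ c b a h2 h1
      linear_combination (-1 : ℝ) * h
        + ((T a τ - T b τ) * T c τ * pd c w x) * hsymm a b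
        + ((T b τ - T c τ) * T a τ * pd a w x) * hsymm b c
        + ((T c τ - T a τ) * T b τ * pd b w x) * hsymm c a
  -- every T m τ is nonzero
  have hTne : ∀ m : Fin (k+1), T (m : ℕ) τ ≠ 0 := by
    intro m
    rw [hT]
    apply mul_ne_zero
    · exact sub_ne_zero_of_ne (hts (k+1) (m : ℕ) le_rfl (by omega) (by omega))
    · rw [Finset.prod_ne_zero_iff]
      intro r hr
      have hr' : r < k + 1 := Finset.mem_range.mp (Finset.mem_of_mem_erase hr)
      exact sub_ne_zero_of_ne (hτ0 r (by omega))
  -- trivial case: all first derivatives vanish at x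
  by_cases hB : ∀ m : Fin (k+1), pd m w x = 0
  · rw [hB i, hB j, hB l]; ring
  push_neg at hB
  obtain ⟨p, hp⟩ := hB
  have hW : T (p : ℕ) τ * pd p w x ≠ 0 := mul_ne_zero (hTne p) hp
  -- decomposition of the 2-form via the pivot p
  have claim1 : ∀ a b : Fin (k+1),
      (T a τ - T b τ) * pd a (pd b w) x * (T p τ * pd p w x)
        = T a τ * pd a w x * ((T p τ - T b τ) * pd p (pd b w) x)
          - T b τ * pd b w x * ((T p τ - T a τ) * pd p (pd a w) x) := by
    intro a b
    by_cases hap : a = p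
    · rw [hap]; ring
    by_cases hbp : b = p
    · rw [hbp]
      linear_combination ((T a τ - T p τ) * (T p τ * pd p w x)) * hsymm a p
    by_cases hab : a = b
    · rw [hab]; ring
    · have h := hC a b p (fun h => hab (Fin.ext h)) (fun h => hbp (Fin.ext h))
        (fun h => hap (Fin.ext h))
      linear_combination h + ((T b τ - T p τ) * T a τ * pd a w x) * hsymm p b
  -- product formulas for T at the indices i, j, l
  have hjm : (j : ℕ) ∈ (Finset.range (k+1)).erase (i : ℕ) :=
    Finset.mem_erase.mpr ⟨by omega, Finset.mem_range.mpr j.isLt⟩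
  have hlm : (l : ℕ) ∈ ((Finset.range (k+1)).erase (i : ℕ)).erase (j : ℕ) :=
    Finset.mem_erase.mpr ⟨by omega, Finset.mem_erase.mpr ⟨by omega, Finset.mem_range.mpr l.isLt⟩⟩
  have him' : (i : ℕ) ∈ (Finset.range (k+1)).erase (j : ℕ) :=
    Finset.mem_erase.mpr ⟨by omega, Finset.mem_range.mpr i.isLt⟩
  have him'' : (i : ℕ) ∈ (Finset.range (k+1)).erase (l : ℕ) :=
    Finset.mem_erase.mpr ⟨by omega, Finset.mem_range.mpr i.isLt⟩
  have hjm'' : (j : ℕ) ∈ ((Finset.range (k+1)).erase (i : ℕ)).erase (l : ℕ) :=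
    Finset.mem_erase.mpr ⟨by omega, Finset.mem_erase.mpr ⟨by omega, Finset.mem_range.mpr j.isLt⟩⟩
  have hFi : ∀ s : ℝ, T (i : ℕ) s = (ts (k+1) - ts (i : ℕ)) *
      ((s - ts (j : ℕ)) * ((s - ts (l : ℕ)) *
        ∏ r ∈ (((Finset.range (k+1)).erase (i : ℕ)).erase (j : ℕ)).erase (l : ℕ), (s - ts r))) := by
    intro s
    rw [hT, ← Finset.mul_prod_erase _ _ hjm, ← Finset.mul_prod_erase _ _ hlm]
  have hFj : ∀ s : ℝ, T (j : ℕ) s = (ts (k+1) - ts (j : ℕ)) *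
      ((s - ts (i : ℕ)) * ((s - ts (l : ℕ)) *
        ∏ r ∈ (((Finset.range (k+1)).erase (i : ℕ)).erase (j : ℕ)).erase (l : ℕ), (s - ts r))) := by
    intro s
    rw [hT, ← Finset.mul_prod_erase _ _ him',
      Finset.erase_right_comm (a := (j : ℕ)) (b := (i : ℕ)),
      ← Finset.mul_prod_erase _ _ hlm]
  have hFl : ∀ s : ℝ, T (l : ℕ) s = (ts (k+1) - ts (l : ℕ)) *
      ((s - ts (i : ℕ)) * ((s - ts (j : ℕ)) *
        ∏ r ∈ (((Finset.range (k+1)).erase (i : ℕ)).erase (j : ℕ)).erase (l : ℕ), (s - ts r))) := by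
    intro s
    rw [hT, ← Finset.mul_prod_erase _ _ him'',
      Finset.erase_right_comm (a := (l : ℕ)) (b := (i : ℕ)),
      ← Finset.mul_prod_erase _ _ hjm'',
      Finset.erase_right_comm (a := (l : ℕ)) (b := (j : ℕ))]
  -- nonvanishing facts
  have hRτ : (∏ r ∈ (((Finset.range (k+1)).erase (i : ℕ)).erase (j : ℕ)).erase (l : ℕ),
      (τ - ts r)) ≠ 0 := by
    rw [Finset.prod_ne_zero_iff]
    intro r hr
    have hr' : r < k + 1 := Finset.mem_range.mp
      (Finset.mem_of_mem_erase (Finset.mem_of_mem_erase (Finset.mem_of_mem_erase hr)))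
    exact sub_ne_zero_of_ne (hτ0 r (by omega))
  have hD1 : ts (j : ℕ) - ts (i : ℕ) ≠ 0 :=
    sub_ne_zero_of_ne (hts (j : ℕ) (i : ℕ) (by omega) (by omega) (by omega))
  have hD2 : ts (l : ℕ) - ts (j : ℕ) ≠ 0 :=
    sub_ne_zero_of_ne (hts (l : ℕ) (j : ℕ) (by omega) (by omega) (by omega))
  have hD3 : ts (i : ℕ) - ts (l : ℕ) ≠ 0 :=
    sub_ne_zero_of_ne (hts (i : ℕ) (l : ℕ) (by omega) (by omega) (by omega))
  have hP1 : τ - ts (i : ℕ) ≠ 0 := sub_ne_zero_of_ne (hτ0 (i : ℕ) (by omega))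
  have hP2 : τ - ts (j : ℕ) ≠ 0 := sub_ne_zero_of_ne (hτ0 (j : ℕ) (by omega))
  have hP3 : τ - ts (l : ℕ) ≠ 0 := sub_ne_zero_of_ne (hτ0 (l : ℕ) (by omega))
  have hP4 : τ - ts (k+1) ≠ 0 := sub_ne_zero_of_ne (hτ0 (k+1) le_rfl)
  exact zak_alg t τ (ts (i : ℕ)) (ts (j : ℕ)) (ts (l : ℕ)) (ts (k+1))
    (∏ r ∈ (((Finset.range (k+1)).erase (i : ℕ)).erase (j : ℕ)).erase (l : ℕ), (t - ts r))
    (∏ r ∈ (((Finset.range (k+1)).erase (i : ℕ)).erase (j : ℕ)).erase (l : ℕ), (τ - ts r))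
    (T p τ * pd p w x)
    (pd i (pd j w) x) (pd j (pd l w) x) (pd l (pd i w) x)
    (pd i w x) (pd j w x) (pd l w x)
    ((T p τ - T i τ) * pd p (pd i w) x)
    ((T p τ - T j τ) * pd p (pd j w) x)
    ((T p τ - T l τ) * pd p (pd l w) x)
    (T i τ) (T j τ) (T l τ) (T i t) (T j t) (T l t)
    (hFi τ) (hFj τ) (hFl τ) (hFi t) (hFj t) (hFl t)
    hD1 hD2 hD3 hP1 hP2 hP3 hP4 hRτ hW
    (claim1 i j) (claim1 j l) (claim1 l i)
end

section
/- Let k ≥ 1, let t₀, …, t_{k+1} be pairwise distinct real numbers and set a_i = (t_{k+1} − t₀)/(t_{k+1} − t_i) for i = 1, …, k. Let U ⊆ ℝ^{k+1} be open and let w : U → ℝ be smooth with ∂₀w nowhere vanishing on U. For t ∈ ℝ and i ∈ {1,…,k} define the vector field L_i(t) : U → ℝ^{k+1} by L_i(t)(x) = −(∂_i w(x)/∂₀ w(x))·e₀ + a_i(t − t_i)·e_i, where e₀, …, e_k is the standard basis. If for every t ∈ ℝ and all 1 ≤ i < j ≤ k the Lie bracket [L_i(t), L_j(t)] vanishes identically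 on U, then w satisfies the hierarchy of integrable systems: for all i, j ∈ {1,…,k}, (a_i − a_j)·∂₀w·∂_i∂_j w + a_j·∂_i w·∂_j∂₀ w − a_i·∂_j w·∂_i∂₀ w = 0 on U. -/
/-- Lie bracket of vector fields on an open subset of `ℝⁿ`:
`[X, Y](x) = DY(x)(X(x)) − DX(x)(Y(x))`. -/
noncomputable def lieBracket {n : ℕ} (X Y : (Fin n → ℝ) → (Fin n → ℝ)) :
    (Fin n → ℝ) → (Fin n → ℝ) :=
  fun x => fderiv ℝ Y x (X x) - fderiv ℝ X x (Y x)

/-- Quotient rule for Fréchet derivatives of real-valued functions. -/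
lemma my_hasFDerivAt_div {E : Type*} [NormedAddCommGroup E] [NormedSpace ℝ E]
    {c d : E → ℝ} {c' d' : E →L[ℝ] ℝ} {x : E}
    (hc : HasFDerivAt c c' x) (hd : HasFDerivAt d d' x) (hx : d x ≠ 0) :
    HasFDerivAt (fun y => c y / d y) (((d x)^2)⁻¹ • (d x • c' - c x • d')) x := by
  have hinv : HasFDerivAt (fun y => (d y)⁻¹) ((-((d x)^2)⁻¹) • d') x := by
    have h1 := (hasFDerivAt_inv' (𝕜 := ℝ) hx).comp x hd
    have h2 : (-((ContinuousLinearMap.mulLeftRight ℝ ℝ) (d x)⁻¹) (d x)⁻¹).comp d'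
        = (-((d x)^2)⁻¹) • d' := by
      ext v
      simp only [ContinuousLinearMap.smul_apply, ContinuousLinearMap.coe_comp',
        Function.comp_apply, ContinuousLinearMap.neg_apply,
        ContinuousLinearMap.mulLeftRight_apply, smul_eq_mul]
      rw [pow_two, mul_inv]
      ring
    rw [h2] at h1
    exact h1
  have h2 := hc.mul hinv
  have h3 : (fun y => c y / d y) = fun y => c y * (d y)⁻¹ := by
    funext y; rw [div_eq_mul_inv]
  rw [h3]
  refine h2.congr_fderiv ?_
  ext v
  simp only [ContinuousLinearMap.smul_apply, ContinuousLinearMap.sub_apply,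
    ContinuousLinearMap.add_apply, smul_eq_mul]
  field_simp
  ring

/-- If the Lax tuple `(L_i(t))` of vector fields commutes for every `t`,
then `w` satisfies the hierarchy of integrable systems (equation (1) of the paper). -/
theorem lax_tuple_commutes_implies_hierarchy
    (k : ℕ) (hk : 1 ≤ k) (ts : ℕ → ℝ)
    (hts : ∀ i j, i ≤ k + 1 → j ≤ k + 1 → i ≠ j → ts i ≠ ts j)
    (a : Fin (k+1) → ℝ)
    (ha : ∀ i : Fin (k+1), 1 ≤ (i : ℕ) →
      a i = (ts (k+1) - ts 0) / (ts (k+1) - ts i))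
    (U : Set (Fin (k+1) → ℝ)) (hU : IsOpen U)
    (w : (Fin (k+1) → ℝ) → ℝ) (hw : ContDiffOn ℝ (⊤ : ℕ∞) w U)
    (hw0 : ∀ x ∈ U, pd (0 : Fin (k+1)) w x ≠ 0)
    (L : Fin (k+1) → ℝ → (Fin (k+1) → ℝ) → (Fin (k+1) → ℝ))
    (hL : ∀ i : Fin (k+1), 1 ≤ (i : ℕ) → ∀ t : ℝ, ∀ x : Fin (k+1) → ℝ,
      L i t x = (-(pd i w x / pd (0 : Fin (k+1)) w x))
          • (Pi.single (0 : Fin (k+1)) 1 : Fin (k+1) → ℝ)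
        + (a i * (t - ts i)) • (Pi.single i 1 : Fin (k+1) → ℝ))
    (hcomm : ∀ t : ℝ, ∀ i j : Fin (k+1), 1 ≤ (i : ℕ) → (i : ℕ) < (j : ℕ) →
      ∀ x ∈ U, lieBracket (L i t) (L j t) x = 0) :
    ∀ i j : Fin (k+1), 1 ≤ (i : ℕ) → 1 ≤ (j : ℕ) → ∀ x ∈ U,
      (a i - a j) * pd (0 : Fin (k+1)) w x * pd i (pd j w) x
        + a j * pd i w x * pd j (pd (0 : Fin (k+1)) w) x
        - a i * pd j w x * pd i (pd (0 : Fin (k+1)) w) x = 0 := by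
  intro i j hi hj x hx
  -- basic smoothness facts at x
  have hwx : ContDiffAt ℝ 2 w x :=
    ((hw x hx).contDiffAt (hU.mem_nhds hx)).of_le (WithTop.coe_le_coe.mpr le_top)
  have hφ : DifferentiableAt ℝ (fderiv ℝ w) x :=
    (hwx.fderiv_right (m := 1) (by norm_num)).differentiableAt one_ne_zero
  set H := fderiv ℝ (fderiv ℝ w) x with hH
  -- derivative of each partial derivative
  have hpd : ∀ m : Fin (k+1), HasFDerivAt (pd m w)
      (H.flip (Pi.single m 1)) x := by
    intro m
    have h := hφ.hasFDerivAt.clm_apply (hasFDerivAt_const (Pi.single m (1:ℝ)) x)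
    simp at h
    exact h
  -- symmetry of the second derivative
  have hsym : ∀ u v, H u v = H v u := fun u v =>
    hwx.isSymmSndFDerivAt (by simp [minSmoothness_of_isRCLikeNormedField]) u v
  -- second partials expressed through H
  have hpd2 : ∀ m n : Fin (k+1), pd m (pd n w) x = H (Pi.single m 1) (Pi.single n 1) := by
    intro m n
    show fderiv ℝ (pd n w) x (Pi.single m 1) = _
    rw [(hpd n).fderiv]
    rfl
  have hw0x : pd (0 : Fin (k+1)) w x ≠ 0 := hw0 x hx
  -- derivative of the coefficient functions
  set D : Fin (k+1) → (Fin (k+1) → ℝ) →L[ℝ] ℝ := fun m =>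
    -(((pd (0 : Fin (k+1)) w x)^2)⁻¹ •
      (pd (0 : Fin (k+1)) w x • H.flip (Pi.single m 1)
        - pd m w x • H.flip (Pi.single (0 : Fin (k+1)) 1))) with hD
  have hg : ∀ m : Fin (k+1),
      HasFDerivAt (fun y => -(pd m w y / pd (0 : Fin (k+1)) w y)) (D m) x := by
    intro m
    exact (my_hasFDerivAt_div (hpd m) (hpd 0) hw0x).neg
  have hLd : ∀ m : Fin (k+1), 1 ≤ (m : ℕ) → ∀ t : ℝ,
      HasFDerivAt (L m t) ((D m).smulRight (Pi.single (0 : Fin (k+1)) 1)) x := by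
    intro m hm t
    have h : L m t = fun y => (-(pd m w y / pd (0 : Fin (k+1)) w y))
        • (Pi.single (0 : Fin (k+1)) 1 : Fin (k+1) → ℝ)
        + (a m * (t - ts m)) • (Pi.single m 1 : Fin (k+1) → ℝ) := funext (hL m hm t)
    rw [h]
    exact ((hg m).smul_const _).add_const _
  -- scalar form of the commutation relation
  have hbr : ∀ (t : ℝ) (p q : Fin (k+1)), 1 ≤ (p : ℕ) → (p : ℕ) < (q : ℕ) →
      D q (L p t x) - D p (L q t x) = 0 := by
    intro t p q hp hpq
    have hq : 1 ≤ (q : ℕ) := hp.trans hpq.le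
    have h0 := hcomm t p q hp hpq x hx
    have h1 : lieBracket (L p t) (L q t) x
        = (D q (L p t x)) • (Pi.single (0 : Fin (k+1)) 1 : Fin (k+1) → ℝ)
          - (D p (L q t x)) • (Pi.single (0 : Fin (k+1)) 1 : Fin (k+1) → ℝ) := by
      show fderiv ℝ (L q t) x (L p t x) - fderiv ℝ (L p t) x (L q t x) = _
      rw [(hLd q hq t).fderiv, (hLd p hp t).fderiv]
      rfl
    rw [h1] at h0
    have h2 := congrFun h0 0
    simpa using h2
  -- value of D n on L m t x
  have hDval : ∀ (n m : Fin (k+1)) (t : ℝ), 1 ≤ (m : ℕ) → D n (L m t x) =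
      (-(pd m w x / pd (0 : Fin (k+1)) w x)) * D n (Pi.single (0 : Fin (k+1)) 1)
        + (a m * (t - ts m)) * D n (Pi.single m 1) := by
    intro n m t hm
    rw [hL m hm t x]
    simp [map_add, map_smul, smul_eq_mul]
  -- the key identity obtained from commutation at two times
  have key : ∀ p q : Fin (k+1), 1 ≤ (p : ℕ) → (p : ℕ) < (q : ℕ) →
      a p * D q (Pi.single p 1) = a q * D p (Pi.single q 1) := by
    intro p q hp hpq
    have hq : 1 ≤ (q : ℕ) := hp.trans hpq.le
    have h0 := hbr 0 p q hp hpq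
    have h1 := hbr 1 p q hp hpq
    rw [hDval q p 0 hp, hDval p q 0 hq] at h0
    rw [hDval q p 1 hp, hDval p q 1 hq] at h1
    linear_combination h1 - h0
  -- values of D on basis vectors
  have hDapp : ∀ n m : Fin (k+1), D n (Pi.single m 1) =
      -(((pd (0 : Fin (k+1)) w x)^2)⁻¹ *
        (pd (0 : Fin (k+1)) w x * H (Pi.single m 1) (Pi.single n 1)
          - pd n w x * H (Pi.single m 1) (Pi.single (0 : Fin (k+1)) 1))) := by
    intro n m
    simp [hD, smul_eq_mul]
  -- final algebra
  rw [hpd2 i j, hpd2 j 0, hpd2 i 0]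
  rcases lt_trichotomy (i : ℕ) (j : ℕ) with hij | hij | hij
  · have hk := key i j hi hij
    rw [hDapp j i, hDapp i j] at hk
    rw [hsym (Pi.single j 1) (Pi.single i 1)] at hk
    have h2 : (pd (0 : Fin (k+1)) w x)^2 ≠ 0 := pow_ne_zero _ hw0x
    field_simp at hk
    linear_combination -hk
  · have hij' : i = j := Fin.ext hij
    subst hij'
    ring
  · have hk := key j i hj hij
    rw [hDapp i j, hDapp j i] at hk
    rw [hsym (Pi.single j 1) (Pi.single i 1)] at hk
    have h2 : (pd (0 : Fin (k+1)) w x)^2 ≠ 0 := pow_ne_zero _ hw0x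
    field_simp at hk
    linear_combination hk
end

section
/- Let F : ℝ³ → ℝ be smooth and define the Cartan invariant of the second order ODE x'' = F(t, x, x') by C = ∂₀²F − (1/2)F·∂₀∂₁²F − (1/2)∂₀F·∂₁²F − (2/3)∂_t∂₀∂₁F + (1/6)∂_t²∂₁²F + (1/3)x₁·∂_t∂₀∂₁²F + (1/6)∂_tF·∂₁³F + (1/3)F·∂_t∂₁³F − (2/3)x₁·∂₀²∂₁F + (1/6)x₁²·∂₀²∂₁²F + (1/6)x₁·∂₀F·∂₁³F + (1/3)x₁·F·∂₀∂₁³F + (2/3)∂₁F·∂₀∂₁F − (1/6)∂₁F·∂_t∂₁²F − (1/6)x₁·∂₁F·∂₀∂₁²F + (1/6)F²·∂₁⁴F. Then at every point of ℝ³ one has 3·C = 4·V'(K₀) + V(K₀'), where K₀' = X_F(K₀). (This is the identity of Theorem 6.1 expressing the Cartan invariant of a second order ODE through the curvature K₀; in the paper the combination is written 4V'(K₀) − V(K₀') with a different sign/normalization convention, and its vanishing is equivalent to the vanishing of C.) -/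
@[fun_prop]
theorem pd_contDiff {n : ℕ} (i : Fin n) {f : (Fin n → ℝ) → ℝ} (hf : ContDiff ℝ (⊤ : ℕ∞) f) :
    ContDiff ℝ (⊤ : ℕ∞) (pd i f) := by
  unfold pd
  exact (hf.fderiv_right (by simp)).clm_apply contDiff_const

theorem pd_add {n : ℕ} (i : Fin n) {f g : (Fin n → ℝ) → ℝ}
    (hf : ContDiff ℝ (⊤ : ℕ∞) f) (hg : ContDiff ℝ (⊤ : ℕ∞) g) :
    pd i (fun p => f p + g p) = fun p => pd i f p + pd i g p := by
  funext x; unfold pd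
  rw [fderiv_fun_add (hf.differentiable (by simp) x) (hg.differentiable (by simp) x)]; rfl

theorem pd_neg {n : ℕ} (i : Fin n) {f : (Fin n → ℝ) → ℝ} :
    pd i (fun p => -(f p)) = fun p => -(pd i f p) := by
  funext x; unfold pd; rw [fderiv_fun_neg]; rfl

theorem pd_sub {n : ℕ} (i : Fin n) {f g : (Fin n → ℝ) → ℝ}
    (hf : ContDiff ℝ (⊤ : ℕ∞) f) (hg : ContDiff ℝ (⊤ : ℕ∞) g) :
    pd i (fun p => f p - g p) = fun p => pd i f p - pd i g p := by
  funext x; unfold pd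
  rw [fderiv_fun_sub (hf.differentiable (by simp) x) (hg.differentiable (by simp) x)]; rfl

theorem pd_mul {n : ℕ} (i : Fin n) {f g : (Fin n → ℝ) → ℝ}
    (hf : ContDiff ℝ (⊤ : ℕ∞) f) (hg : ContDiff ℝ (⊤ : ℕ∞) g) :
    pd i (fun p => f p * g p) = fun p => pd i f p * g p + f p * pd i g p := by
  funext x; unfold pd
  rw [fderiv_fun_mul (hf.differentiable (by simp) x) (hg.differentiable (by simp) x)]
  simp; ring

theorem pd_pow2 {n : ℕ} (i : Fin n) {f : (Fin n → ℝ) → ℝ} (hf : ContDiff ℝ (⊤ : ℕ∞) f) :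
    pd i (fun p => (f p)^2) = fun p => 2 * f p * pd i f p := by
  have : (fun p => (f p)^2) = fun p => f p * f p := by funext p; ring
  rw [this, pd_mul i hf hf]
  funext p; ring

theorem pd_const {n : ℕ} (i : Fin n) (c : ℝ) :
    pd i (fun _ => c) = fun _ => (0:ℝ) := by
  funext x; unfold pd; rw [fderiv_fun_const]; rfl

theorem pd_coord {n : ℕ} (i j : Fin n) :
    pd i (fun p => p j) = fun _ : Fin n → ℝ => ((Pi.single i 1 : Fin n → ℝ) j) := by
  funext x; unfold pd
  have : (fun p : Fin n → ℝ => p j) = (ContinuousLinearMap.proj j : (Fin n → ℝ) →L[ℝ] ℝ) := rfl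
  rw [this, ContinuousLinearMap.fderiv]
  rfl

theorem pd_comm {n : ℕ} (i j : Fin n) {f : (Fin n → ℝ) → ℝ} (hf : ContDiff ℝ (⊤ : ℕ∞) f) :
    pd i (pd j f) = pd j (pd i f) := by
  funext x
  have hd : DifferentiableAt ℝ (fderiv ℝ f) x :=
    ((hf.fderiv_right (m := 1) (by exact WithTop.coe_le_coe.mpr (le_top : ((1 + 1 : ℕ∞)) ≤ ⊤))).differentiable one_ne_zero) x
  have key : ∀ v w : Fin n → ℝ,
      fderiv ℝ (fun y => fderiv ℝ f y v) x w = fderiv ℝ (fderiv ℝ f) x w v := by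
    intro v w
    rw [fderiv_clm_apply hd (differentiableAt_const v)]
    simp
  have hsymm : IsSymmSndFDerivAt ℝ f x :=
    hf.contDiffAt.isSymmSndFDerivAt
      (by rw [minSmoothness_of_isRCLikeNormedField]; exact WithTop.coe_le_coe.mpr (le_top : (2 : ℕ∞) ≤ ⊤))
  show fderiv ℝ (fun y => fderiv ℝ f y (Pi.single j 1)) x (Pi.single i 1)
     = fderiv ℝ (fun y => fderiv ℝ f y (Pi.single i 1)) x (Pi.single j 1)
  rw [key, key, hsymm.eq]

theorem pd_x1_0 : pd (0 : Fin 3) (fun p => p 2) = fun _ => (0:ℝ) := by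
  rw [pd_coord]; funext x; simp [Pi.single_apply]

theorem pd_x1_1 : pd (1 : Fin 3) (fun p => p 2) = fun _ => (0:ℝ) := by
  rw [pd_coord]; funext x; simp [Pi.single_apply]

theorem pd_x1_2 : pd (2 : Fin 3) (fun p => p 2) = fun _ => (1:ℝ) := by
  rw [pd_coord]; funext x; simp [Pi.single_apply]

theorem pd_swap10 {f : (Fin 3 → ℝ) → ℝ} (hf : ContDiff ℝ (⊤ : ℕ∞) f) :
    pd (1:Fin 3) (pd 0 f) = pd 0 (pd 1 f) := pd_comm 1 0 hf
theorem pd_swap20 {f : (Fin 3 → ℝ) → ℝ} (hf : ContDiff ℝ (⊤ : ℕ∞) f) :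
    pd (2:Fin 3) (pd 0 f) = pd 0 (pd 2 f) := pd_comm 2 0 hf
theorem pd_swap21 {f : (Fin 3 → ℝ) → ℝ} (hf : ContDiff ℝ (⊤ : ℕ∞) f) :
    pd (2:Fin 3) (pd 1 f) = pd 1 (pd 2 f) := pd_comm 2 1 hf

namespace Order2

/- Coordinates on `ℝ³` are `(t, x₀, x₁)`, i.e. `∂_t = pd 0`, `∂₀ = pd 1`, `∂₁ = pd 2`,
and `x₁` is the coordinate `p 2`. -/

/-- Total derivative `X_F = ∂_t + x₁·∂₀ + F·∂₁` of the ODE `x'' = F(t,x,x')`. -/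
noncomputable def XF (F : (Fin 3 → ℝ) → ℝ) (u : (Fin 3 → ℝ) → ℝ) : (Fin 3 → ℝ) → ℝ :=
  fun p => pd 0 u p + p 2 * pd 1 u p + F p * pd 2 u p

/-- The curvature `K₀ = −∂₀F + (1/2)X_F(∂₁F) − (1/4)(∂₁F)²`. -/
noncomputable def K0 (F : (Fin 3 → ℝ) → ℝ) : (Fin 3 → ℝ) → ℝ :=
  fun p => -(pd 1 F p) + (1/2) * XF F (pd 2 F) p - (1/4) * (pd 2 F p)^2

/-- The operator `V = ∂₁`. -/
noncomputable def V (u : (Fin 3 → ℝ) → ℝ) : (Fin 3 → ℝ) → ℝ := pd 2 u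

/-- The operator `V' = −∂₀ − (1/2)(∂₁F)·∂₁`. -/
noncomputable def V' (F : (Fin 3 → ℝ) → ℝ) (u : (Fin 3 → ℝ) → ℝ) : (Fin 3 → ℝ) → ℝ :=
  fun p => -(pd 1 u p) - (1/2) * pd 2 F p * pd 2 u p

/-- The Cartan invariant of the second order ODE `x'' = F(t, x, x')`. -/
noncomputable def C (F : (Fin 3 → ℝ) → ℝ) : (Fin 3 → ℝ) → ℝ := fun p =>
  pd 1 (pd 1 F) p
  - (1/2) * F p * pd 1 (pd 2 (pd 2 F)) p
  - (1/2) * pd 1 F p * pd 2 (pd 2 F) p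
  - (2/3) * pd 0 (pd 1 (pd 2 F)) p
  + (1/6) * pd 0 (pd 0 (pd 2 (pd 2 F))) p
  + (1/3) * p 2 * pd 0 (pd 1 (pd 2 (pd 2 F))) p
  + (1/6) * pd 0 F p * pd 2 (pd 2 (pd 2 F)) p
  + (1/3) * F p * pd 0 (pd 2 (pd 2 (pd 2 F))) p
  - (2/3) * p 2 * pd 1 (pd 1 (pd 2 F)) p
  + (1/6) * (p 2)^2 * pd 1 (pd 1 (pd 2 (pd 2 F))) p
  + (1/6) * p 2 * pd 1 F p * pd 2 (pd 2 (pd 2 F)) p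
  + (1/3) * p 2 * F p * pd 1 (pd 2 (pd 2 (pd 2 F))) p
  + (2/3) * pd 2 F p * pd 1 (pd 2 F) p
  - (1/6) * pd 2 F p * pd 0 (pd 2 (pd 2 F)) p
  - (1/6) * p 2 * pd 2 F p * pd 1 (pd 2 (pd 2 F)) p
  + (1/6) * (F p)^2 * pd 2 (pd 2 (pd 2 (pd 2 F))) p

end Order2

theorem XF_def (F u : (Fin 3 → ℝ) → ℝ) :
    Order2.XF F u = fun p => pd 0 u p + p 2 * pd 1 u p + F p * pd 2 u p := rfl

theorem K0_def (F : (Fin 3 → ℝ) → ℝ) :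
    Order2.K0 F = fun p =>
      -(pd 1 F p) + (1/2) * (pd 0 (pd 2 F) p + p 2 * pd 1 (pd 2 F) p + F p * pd 2 (pd 2 F) p)
        - (1/4) * (pd 2 F p)^2 := rfl

open Order2 in
/-- Theorem 6.1, identity for the Cartan invariant of second order ODEs:
`3·C = 4·V'(K₀) + V(K₀')` where `K₀' = X_F(K₀)`. -/
theorem cartan_invariant_order2 (F : (Fin 3 → ℝ) → ℝ) (hF : ContDiff ℝ (⊤ : ℕ∞) F) :
    ∀ p : Fin 3 → ℝ, 3 * C F p = 4 * V' F (K0 F) p + V (XF F (K0 F)) p := by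
  intro p
  simp only [C, V, V', XF_def, K0_def]
  simp (disch := fun_prop) only [pd_add, pd_sub, pd_neg, pd_mul, pd_pow2, pd_const,
    pd_x1_0, pd_x1_1, pd_x1_2, pd_swap10, pd_swap20, pd_swap21]
  ring
end

section
/- (Theorem 10.1, part 3.) Let U ⊆ ℝ² be open, let w : U → ℝ be smooth with ∂₀w and ∂₁w nowhere vanishing on U, and let t₀, t₁, t₂ be pairwise distinct real numbers. Define an affine connection ∇ on U by the Christoffel symbols Γ⁰₀₀ = ∂₀∂₀w/∂₀w − ∂₀∂₁w/∂₁w, Γ¹₁₁ = ∂₁∂₁w/∂₁w − ∂₀∂₁w/∂₀w, and all other Christoffel symbols zero; i.e. for a smooth vector field Y = (Y⁰, Y¹) : U → ℝ², (∇_{e₀}Y)⁰ = ∂₀Y⁰ + Γ⁰₀₀·Y⁰, (∇_{e₀}Y)¹ = ∂₀Y¹, (∇_{e₁}Y)⁰ = ∂₁Y⁰, (∇_{e₁}Y)¹ = ∂₁Y¹ + Γ¹₁₁·Y¹. For t ∈ ℝ let V(t) : U → ℝ² be the vector field V(t) = ((t₂ − t₁)(t − t₀)/∂₀w, −(t₂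 − t₀)(t − t₁)/∂₁w). Then ∇ is torsion-free, and for every t ∈ ℝ: ∇_{e₀}V(t) = −(∂₀∂₁w/∂₁w)·V(t) and ∇_{e₁}V(t) = −(∂₀∂₁w/∂₀w)·V(t); in particular ∇_Y V(t) is everywhere proportional to V(t) for every vector field Y. -/
open Finset

/-- Covariant derivative in the direction `e_j` of a vector field `Y` for the affine
connection with Christoffel symbols `Γ`: `(∇_{e_j}Y)^i = ∂_j Y^i + Σ_m Γ^i_{jm}·Y^m`. -/
noncomputable def covD (Γ : Fin 2 → Fin 2 → Fin 2 → (Fin 2 → ℝ) → ℝ) (j : Fin 2)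
    (Y : (Fin 2 → ℝ) → (Fin 2 → ℝ)) : (Fin 2 → ℝ) → (Fin 2 → ℝ) :=
  fun p i => pd j (fun q => Y q i) p + ∑ m : Fin 2, Γ i j m p * Y p m

/-- Derivative of a constant divided by a function. -/
lemma pd_const_div {p : Fin 2 → ℝ} {g : (Fin 2 → ℝ) → ℝ} (hg : DifferentiableAt ℝ g p)
    (hgp : g p ≠ 0) (c : ℝ) (j : Fin 2) :
    pd j (fun q => c / g q) p = -(c * pd j g p) / (g p) ^ 2 := by
  have h1 : HasDerivAt (fun y : ℝ => c / y) (-(c / (g p) ^ 2)) (g p) := by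
    simpa [div_eq_mul_inv, mul_comm, neg_div] using
      ((hasDerivAt_inv hgp).const_mul c)
  have h2 : HasFDerivAt (fun q => c / g q) ((-(c / (g p) ^ 2)) • fderiv ℝ g p) p :=
    h1.comp_hasFDerivAt p hg.hasFDerivAt
  have := h2.fderiv
  unfold pd
  rw [this]
  simp [pd]
  ring

lemma pd_pd_eq {w : (Fin 2 → ℝ) → ℝ} {p : Fin 2 → ℝ} (hw : ContDiffAt ℝ (⊤ : ℕ∞) w p) (i j : Fin 2) :
    pd j (pd i w) p = fderiv ℝ (fderiv ℝ w) p (Pi.single j 1) (Pi.single i 1) := by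
  have hf' : ContDiffAt ℝ (⊤ : ℕ∞) (fderiv ℝ w) p := hw.fderiv_right (by simp)
  have hd : DifferentiableAt ℝ (fderiv ℝ w) p := hf'.differentiableAt (by simp)
  have hL := (ContinuousLinearMap.apply ℝ ℝ
    (Pi.single (M := fun _ : Fin 2 => ℝ) i 1)).hasFDerivAt.comp p hd.hasFDerivAt
  have h2 : fderiv ℝ (fun x => (fderiv ℝ w x) (Pi.single (M := fun _ : Fin 2 => ℝ) i 1)) p
      = (ContinuousLinearMap.apply ℝ ℝ (Pi.single (M := fun _ : Fin 2 => ℝ) i 1)).comp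
        (fderiv ℝ (fderiv ℝ w) p) := hL.fderiv
  unfold pd
  rw [h2]
  rfl

lemma pd_diff {w : (Fin 2 → ℝ) → ℝ} {p : Fin 2 → ℝ} (hw : ContDiffAt ℝ (⊤ : ℕ∞) w p) (i : Fin 2) :
    DifferentiableAt ℝ (pd i w) p := by
  have hf' : ContDiffAt ℝ (⊤ : ℕ∞) (fderiv ℝ w) p := hw.fderiv_right (by simp)
  have hd : DifferentiableAt ℝ (fderiv ℝ w) p := hf'.differentiableAt (by simp)
  exact ((ContinuousLinearMap.apply ℝ ℝ
    (Pi.single (M := fun _ : Fin 2 => ℝ) i 1)).hasFDerivAt.comp p hd.hasFDerivAt).differentiableAt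

lemma pd_comm_s15 {w : (Fin 2 → ℝ) → ℝ} {p : Fin 2 → ℝ} (hw : ContDiffAt ℝ (⊤ : ℕ∞) w p) (i j : Fin 2) :
    pd j (pd i w) p = pd i (pd j w) p := by
  rw [pd_pd_eq hw, pd_pd_eq hw]
  exact (hw.isSymmSndFDerivAt (by rw [minSmoothness_of_isRCLikeNormedField]; exact WithTop.coe_le_coe.2 (le_top : (2 : ℕ∞) ≤ ⊤))) _ _

/-- Theorem 10.1, part 3, for planar 3-webs / Veronese webs with k = 1:
the canonical connection with `Γ⁰₀₀ = ∂₀∂₀w/∂₀w − ∂₀∂₁w/∂₁w`,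
`Γ¹₁₁ = ∂₁∂₁w/∂₁w − ∂₀∂₁w/∂₀w` and all other Christoffel symbols zero is torsion-free and
satisfies `∇_{e₀}V(t) = −(∂₀∂₁w/∂₁w)·V(t)`, `∇_{e₁}V(t) = −(∂₀∂₁w/∂₀w)·V(t)`;
in particular `∇_Y V(t)` is everywhere proportional to `V(t)`. -/
theorem canonical_connection_k1
    (U : Set (Fin 2 → ℝ)) (hU : IsOpen U)
    (w : (Fin 2 → ℝ) → ℝ) (hw : ContDiffOn ℝ (⊤ : ℕ∞) w U)
    (hw0 : ∀ p ∈ U, pd 0 w p ≠ 0) (hw1 : ∀ p ∈ U, pd 1 w p ≠ 0)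
    (t0 t1 t2 : ℝ) (h01 : t0 ≠ t1) (h02 : t0 ≠ t2) (h12 : t1 ≠ t2)
    (Γ : Fin 2 → Fin 2 → Fin 2 → (Fin 2 → ℝ) → ℝ)
    (hΓ000 : ∀ p, Γ 0 0 0 p = pd 0 (pd 0 w) p / pd 0 w p - pd 0 (pd 1 w) p / pd 1 w p)
    (hΓ111 : ∀ p, Γ 1 1 1 p = pd 1 (pd 1 w) p / pd 1 w p - pd 0 (pd 1 w) p / pd 0 w p)
    (hΓzero : ∀ m i j : Fin 2, ¬(m = 0 ∧ i = 0 ∧ j = 0) → ¬(m = 1 ∧ i = 1 ∧ j = 1) →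
      ∀ p, Γ m i j p = 0)
    (V : ℝ → (Fin 2 → ℝ) → (Fin 2 → ℝ))
    (hV : ∀ t p, V t p =
      ![(t2 - t1) * (t - t0) / pd 0 w p, -((t2 - t0) * (t - t1)) / pd 1 w p]) :
    (∀ m i j : Fin 2, ∀ p, Γ m i j p - Γ m j i p = 0) ∧
    (∀ t : ℝ, ∀ p ∈ U,
      covD Γ 0 (V t) p = (-(pd 0 (pd 1 w) p / pd 1 w p)) • V t p ∧
      covD Γ 1 (V t) p = (-(pd 0 (pd 1 w) p / pd 0 w p)) • V t p) ∧
    (∀ Y : (Fin 2 → ℝ) → (Fin 2 → ℝ), ∀ t : ℝ, ∀ p ∈ U, ∃ c : ℝ,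
      Y p 0 • covD Γ 0 (V t) p + Y p 1 • covD Γ 1 (V t) p = c • V t p) := by
  have hz : ∀ a b c : Fin 2, ¬(a = b ∧ b = c) → ∀ p, Γ a b c p = 0 := by
    intro a b c h p
    exact hΓzero a b c (by rintro ⟨rfl, rfl, rfl⟩; exact h ⟨rfl, rfl⟩)
      (by rintro ⟨rfl, rfl, rfl⟩; exact h ⟨rfl, rfl⟩) p
  have key : ∀ t : ℝ, ∀ p ∈ U,
      covD Γ 0 (V t) p = (-(pd 0 (pd 1 w) p / pd 1 w p)) • V t p ∧
      covD Γ 1 (V t) p = (-(pd 0 (pd 1 w) p / pd 0 w p)) • V t p := by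
    intro t p hp
    have hwp : ContDiffAt ℝ (⊤ : ℕ∞) w p := hw.contDiffAt (hU.mem_nhds hp)
    have hA : pd 0 w p ≠ 0 := hw0 p hp
    have hB : pd 1 w p ≠ 0 := hw1 p hp
    have hd0 : DifferentiableAt ℝ (pd 0 w) p := pd_diff hwp 0
    have hd1 : DifferentiableAt ℝ (pd 1 w) p := pd_diff hwp 1
    have hV0 : (fun q => V t q 0) = fun q => ((t2 - t1) * (t - t0)) / pd 0 w q := by
      funext q; rw [hV]; simp
    have hV1 : (fun q => V t q 1) = fun q => (-((t2 - t0) * (t - t1))) / pd 1 w q := by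
      funext q; rw [hV]; simp
    have e00 : pd 0 (fun q => V t q 0) p
        = -(((t2 - t1) * (t - t0)) * pd 0 (pd 0 w) p) / (pd 0 w p) ^ 2 := by
      rw [hV0]; exact pd_const_div hd0 hA _ 0
    have e01 : pd 0 (fun q => V t q 1) p
        = -((-((t2 - t0) * (t - t1))) * pd 0 (pd 1 w) p) / (pd 1 w p) ^ 2 := by
      rw [hV1]; exact pd_const_div hd1 hB _ 0
    have e10 : pd 1 (fun q => V t q 0) p
        = -(((t2 - t1) * (t - t0)) * pd 1 (pd 0 w) p) / (pd 0 w p) ^ 2 := by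
      rw [hV0]; exact pd_const_div hd0 hA _ 1
    have e11 : pd 1 (fun q => V t q 1) p
        = -((-((t2 - t0) * (t - t1))) * pd 1 (pd 1 w) p) / (pd 1 w p) ^ 2 := by
      rw [hV1]; exact pd_const_div hd1 hB _ 1
    have hcomm : pd 1 (pd 0 w) p = pd 0 (pd 1 w) p := pd_comm_s15 hwp 0 1
    constructor
    · funext i
      fin_cases i
      · simp only [covD, Fin.sum_univ_two, Pi.smul_apply, smul_eq_mul, Fin.isValue, Fin.mk_zero, Fin.mk_one]
        rw [e00, hΓ000, hz 0 0 1 (by decide), hV t p]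
        simp only [Matrix.cons_val_zero, Matrix.cons_val_one, Matrix.head_cons]
        field_simp
        ring
      · simp only [covD, Fin.sum_univ_two, Pi.smul_apply, smul_eq_mul, Fin.isValue, Fin.mk_zero, Fin.mk_one]
        rw [e01, hz 1 0 0 (by decide), hz 1 0 1 (by decide), hV t p]
        simp only [Matrix.cons_val_zero, Matrix.cons_val_one, Matrix.head_cons]
        field_simp
        ring
    · funext i
      fin_cases i
      · simp only [covD, Fin.sum_univ_two, Pi.smul_apply, smul_eq_mul, Fin.isValue, Fin.mk_zero, Fin.mk_one]
        rw [e10, hcomm, hz 0 1 0 (by decide), hz 0 1 1 (by decide), hV t p]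
        simp only [Matrix.cons_val_zero, Matrix.cons_val_one, Matrix.head_cons]
        field_simp
        ring
      · simp only [covD, Fin.sum_univ_two, Pi.smul_apply, smul_eq_mul, Fin.isValue, Fin.mk_zero, Fin.mk_one]
        rw [e11, hΓ111, hz 1 1 0 (by decide), hV t p]
        simp only [Matrix.cons_val_zero, Matrix.cons_val_one, Matrix.head_cons]
        field_simp
        ring
  refine ⟨?_, key, ?_⟩
  · intro m i j p
    rcases eq_or_ne i j with h | h
    · subst h; ring
    · rw [hz m i j (fun hh => h hh.2), hz m j i (fun hh => h.symm hh.2), sub_self]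
  · intro Y t p hp
    obtain ⟨h0, h1⟩ := key t p hp
    refine ⟨Y p 0 * (-(pd 0 (pd 1 w) p / pd 1 w p))
      + Y p 1 * (-(pd 0 (pd 1 w) p / pd 0 w p)), ?_⟩
    rw [h0, h1, smul_smul, smul_smul, ← add_smul]
end

section
/- (Theorem 10.1, part 1, coordinate form.) Let k ≥ 1, let t₀, …, t_{k+1} be pairwise distinct real numbers, let U ⊆ ℝ^{k+1} be open, let w : U → ℝ be smooth with ∂_i w nowhere vanishing on U for every i, and let α₀, …, α_k : U → ℝ be smooth. Define an affine connection ∇ on U by ∇_{∂_j}∂_i = (∂_j∂_i w/∂_i w + α_j)·∂_i, i.e. for a smooth vector field Y : U → ℝ^{k+1}, (∇_{e_j}Y)^i = ∂_j(Y^i) + (∂_j∂_i w/∂_i w + α_j)·Y^i. Let V(t) : U → ℝ^{k+1} be the vector field with components V(t)^i = (t − t_i)^k / (∂_i w · ∏_{l ∈ {0,…,k+1}, l ≠ i} (t_l − t_i)). Then for every j ∈ {0,…,k} and every t ∈ ℝ: ∇_{e_j}V(t) = α_j·V(t) on U. In particular each such connection preserves the field of null directions ℝ·V(t) of the Veronese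 web, i.e. it is a totally geodesic paraconformal connection of the web. -/
open Finset

/-- Theorem 10.1, part 1, coordinate form: every connection
`∇_{e_j}Y^i = ∂_j Y^i + (∂_j∂_i w/∂_i w + α_j)·Y^i` satisfies
`∇_{e_j}V(t) = α_j·V(t)`, i.e. it preserves the null directions of the Veronese web. -/
theorem totally_geodesic_connections_of_veronese_web
    (k : ℕ) (hk : 1 ≤ k) (ts : ℕ → ℝ)
    (hts : ∀ i j, i ≤ k + 1 → j ≤ k + 1 → i ≠ j → ts i ≠ ts j)
    (U : Set (Fin (k+1) → ℝ)) (hU : IsOpen U)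
    (w : (Fin (k+1) → ℝ) → ℝ) (hw : ContDiffOn ℝ (⊤ : ℕ∞) w U)
    (hw0 : ∀ i : Fin (k+1), ∀ x ∈ U, pd i w x ≠ 0)
    (α : Fin (k+1) → (Fin (k+1) → ℝ) → ℝ) (hα : ∀ j, ContDiffOn ℝ (⊤ : ℕ∞) (α j) U)
    (V : ℝ → (Fin (k+1) → ℝ) → (Fin (k+1) → ℝ))
    (hV : ∀ t x, ∀ i : Fin (k+1), V t x i =
      (t - ts i)^k /
        (pd i w x * ∏ l ∈ (Finset.range (k+2)).erase (i : ℕ), (ts l - ts i))) :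
    ∀ j : Fin (k+1), ∀ t : ℝ, ∀ x ∈ U, ∀ i : Fin (k+1),
      pd j (fun q => V t q i) x + (pd j (pd i w) x / pd i w x + α j x) * V t x i
        = α j x * V t x i := by
  intro j t x hx i
  set g : (Fin (k+1) → ℝ) → ℝ := pd i w with hg
  set C : ℝ := (t - ts i)^k / ∏ l ∈ (Finset.range (k+2)).erase (i : ℕ), (ts l - ts i)
    with hC
  have hgx : g x ≠ 0 := hw0 i x hx
  have hcd : ContDiffAt ℝ (⊤ : ℕ∞) w x := hw.contDiffAt (hU.mem_nhds hx)
  have hder : DifferentiableAt ℝ g x := by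
    have h2 : DifferentiableAt ℝ (fderiv ℝ w) x :=
      (hcd.fderiv_right (WithTop.coe_le_coe.mpr (le_top : (1 : ℕ∞) + 1 ≤ ⊤))).differentiableAt one_ne_zero
    exact ((ContinuousLinearMap.apply ℝ ℝ
      (Pi.single i 1 : Fin (k+1) → ℝ)).differentiableAt).comp x h2
  have hfun : (fun q => V t q i) = fun q => C * (g q)⁻¹ := by
    funext q
    rw [hV t q i, hC, div_eq_mul_inv, div_eq_mul_inv, mul_inv]
    ring
  have H : HasFDerivAt (fun q => C * (g q)⁻¹)
      (C • ((ContinuousLinearMap.smulRight (1 : ℝ →L[ℝ] ℝ) (-(g x ^ 2)⁻¹)).comp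
        (fderiv ℝ g x))) x :=
    ((hasFDerivAt_inv hgx).comp x hder.hasFDerivAt).const_mul C
  have hpd : pd j (fun q => V t q i) x = C * (-(g x ^ 2)⁻¹ * pd j g x) := by
    rw [hfun]
    show fderiv ℝ (fun q => C * (g q)⁻¹) x (Pi.single j 1) = _
    rw [H.fderiv]
    simp only [ContinuousLinearMap.coe_smul', Pi.smul_apply,
      ContinuousLinearMap.coe_comp', Function.comp_apply,
      ContinuousLinearMap.smulRight_apply, ContinuousLinearMap.one_apply,
      smul_eq_mul, pd]
    ring
  rw [hpd, hV t x i]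
  have hVeq : (t - ts i)^k /
      (pd i w x * ∏ l ∈ (Finset.range (k+2)).erase (i : ℕ), (ts l - ts i))
      = C / g x := by
    rw [hC, div_eq_mul_inv, div_eq_mul_inv, div_eq_mul_inv, mul_inv]; ring
  rw [hVeq]
  have : pd j (pd i w) x = pd j g x := by rw [hg]
  rw [this]
  field_simp
  ring
end

section
/- Let k ≥ 1, let t₀, …, t_{k+1} be pairwise distinct real numbers, let U ⊆ ℝ^{k+1} be open, and let w : U → ℝ be smooth with ∂_i w nowhere vanishing on U for every i. For t ∈ ℝ let ω(t) be the one-form on U with components ω(t)_i = (t_{k+1} − t_i)·(∏_{j ∈ {0,…,k}, j ≠ i} (t − t_j))·∂_i w, and for m ≥ 0 let ω^{(m)}(t) be its m-th derivative with respect to t, i.e. the one-form with components ω^{(m)}(t)_i = (t_{k+1} − t_i)·(d^m/dt^m ∏_{j ≠ i}(t − t_j))·∂_i w. Let V(t) : U → ℝ^{k+1} be the vector field with components V(t)^i = (t − t_i)^k / (∂_i w · ∏_{l ∈ {0,…,k+1}, l ≠ i} (t_l − t_i)). Then for every t ∈ ℝ, every x ∈ U and every m with 0 ≤ m ≤ k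 − 1: Σ_{i=0}^{k} ω^{(m)}(t)_i(x)·V(t)^i(x) = 0. Thus V(t) lies in ker ω(t) ∩ ker ω'(t) ∩ … ∩ ker ω^{(k−1)}(t), expressing the duality between the Veronese curve of one-forms ω(t) and the curve of null directions V(t). -/
open Finset

private lemma iter_deriv_polyeval (m : ℕ) (p : Polynomial ℝ) :
    deriv^[m] (fun x => p.eval x) = fun x => (Polynomial.derivative^[m] p).eval x := by
  induction m generalizing p with
  | zero => rfl
  | succ m ih =>
    rw [Function.iterate_succ_apply, Function.iterate_succ_apply]
    rw [show deriv (fun x => p.eval x) = fun x => (Polynomial.derivative p).eval x from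
      funext fun x => Polynomial.deriv p]
    exact ih _

private lemma prod_neg_sub {s : Finset ℕ} (f g : ℕ → ℝ) :
    ∏ j ∈ s, (f j - g j) = (-1) ^ s.card * ∏ j ∈ s, (g j - f j) := by
  rw [← Finset.prod_const, ← Finset.prod_mul_distrib]
  exact Finset.prod_congr rfl fun j _ => by ring

/-- duality between the Veronese curve of one-forms `ω(t)` and the curve
of null directions `V(t)`: for every `0 ≤ m ≤ k − 1`, the vector `V(t)` lies in the kernel
of the `m`-th `t`-derivative `ω^{(m)}(t)` of the one-form `ω(t)` of the Veronese web. -/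
theorem veronese_duality
    (k : ℕ) (hk : 1 ≤ k) (ts : ℕ → ℝ)
    (hts : ∀ i j, i ≤ k + 1 → j ≤ k + 1 → i ≠ j → ts i ≠ ts j)
    (U : Set (Fin (k+1) → ℝ)) (hU : IsOpen U)
    (w : (Fin (k+1) → ℝ) → ℝ) (hw : ContDiffOn ℝ (⊤ : ℕ∞) w U)
    (hw0 : ∀ i : Fin (k+1), ∀ x ∈ U, pd i w x ≠ 0)
    (ω : ℕ → ℝ → (Fin (k+1) → ℝ) → Fin (k+1) → ℝ)
    (hω : ∀ m t x, ∀ i : Fin (k+1), ω m t x i =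
      (ts (k+1) - ts i) *
        (deriv^[m] (fun s => ∏ j ∈ (Finset.range (k+1)).erase (i : ℕ), (s - ts j)) t) *
        pd i w x)
    (V : ℝ → (Fin (k+1) → ℝ) → (Fin (k+1) → ℝ))
    (hV : ∀ t x, ∀ i : Fin (k+1), V t x i =
      (t - ts i)^k /
        (pd i w x * ∏ l ∈ (Finset.range (k+2)).erase (i : ℕ), (ts l - ts i))) :
    ∀ t : ℝ, ∀ x ∈ U, ∀ m : ℕ, m < k →
      ∑ i : Fin (k+1), ω m t x i * V t x i = 0 := by
  intro t x hx m hm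
  -- the polynomial p i
  set p : ℕ → Polynomial ℝ := fun i =>
    ∏ j ∈ (Finset.range (k+1)).erase i, (Polynomial.X - Polynomial.C (ts j)) with hp
  -- coefficients
  set c : ℕ → ℝ := fun i =>
    (t - ts i)^k / ∏ l ∈ (Finset.range (k+1)).erase i, (ts l - ts i) with hc
  have hcard : ∀ i : Fin (k+1), ((Finset.range (k+1)).erase (i : ℕ)).card = k := by
    intro i
    rw [Finset.card_erase_of_mem (Finset.mem_range.2 i.isLt), Finset.card_range]
    omega
  -- Step 1: each summand equals c i * eval t (derivative^[m] (p i))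
  have hterm : ∀ i : Fin (k+1), ω m t x i * V t x i =
      c i * (Polynomial.derivative^[m] (p (i : ℕ))).eval t := by
    intro i
    rw [hω, hV]
    have hD : deriv^[m] (fun s => ∏ j ∈ (Finset.range (k+1)).erase (i : ℕ), (s - ts j)) t =
        (Polynomial.derivative^[m] (p (i : ℕ))).eval t := by
      have : (fun s => ∏ j ∈ (Finset.range (k+1)).erase (i : ℕ), (s - ts j)) =
          fun s => (p (i : ℕ)).eval s := by
        funext s; simp [hp, Polynomial.eval_prod]
      rw [this, iter_deriv_polyeval]
    rw [hD]
    -- split the product over range (k+2)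
    have hsplit : ∏ l ∈ (Finset.range (k+2)).erase (i : ℕ), (ts l - ts i) =
        (ts (k+1) - ts i) * ∏ l ∈ (Finset.range (k+1)).erase (i : ℕ), (ts l - ts i) := by
      rw [Finset.range_add_one, Finset.erase_insert_of_ne (by omega : (k + 1 : ℕ) ≠ (i : ℕ)),
        Finset.prod_insert (by simp)]
    rw [hsplit]
    have hne1 : ts (k+1) - ts i ≠ 0 :=
      sub_ne_zero_of_ne (hts (k+1) i le_rfl (by omega) (by omega))
    have hne2 : ∏ l ∈ (Finset.range (k+1)).erase (i : ℕ), (ts l - ts i) ≠ 0 := by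
      refine Finset.prod_ne_zero_iff.2 fun l hl => ?_
      have hl' := Finset.mem_erase.1 hl
      exact sub_ne_zero_of_ne (hts l i (by have := Finset.mem_range.1 hl'.2; omega)
        (by omega) hl'.1)
    have hnw := hw0 i x hx
    rw [hc]
    field_simp
  simp_rw [hterm]
  -- Step 2: the sum is eval t of derivative^[m] of ∑ C (c i) * p i
  have hsum : ∑ i : Fin (k+1), c (i : ℕ) * (Polynomial.derivative^[m] (p (i : ℕ))).eval t =
      (Polynomial.derivative^[m]
        (∑ i ∈ Finset.range (k+1), Polynomial.C (c i) * p i)).eval t := by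
    rw [Polynomial.iterate_derivative_sum, Polynomial.eval_finset_sum,
      Fin.sum_univ_eq_sum_range (fun i => c i * (Polynomial.derivative^[m] (p i)).eval t)]
    refine Finset.sum_congr rfl fun i _ => ?_
    rw [Polynomial.iterate_derivative_C_mul, Polynomial.eval_mul, Polynomial.eval_C]
  rw [hsum]
  -- Step 3: Lagrange identity ∑ C (c i) * p i = (X - C t) ^ k
  have hinj : Set.InjOn ts (Finset.range (k+1)) := by
    intro a ha b hb hab
    by_contra h
    exact hts a b (by have := Finset.mem_range.1 (Finset.mem_coe.1 ha); omega)
      (by have := Finset.mem_range.1 (Finset.mem_coe.1 hb); omega) h hab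
  have hdeg : ((Polynomial.X - Polynomial.C t : Polynomial ℝ) ^ k).degree <
      (Finset.range (k+1)).card := by
    rw [Finset.card_range, Polynomial.degree_pow, Polynomial.degree_X_sub_C]
    simp
    exact_mod_cast Nat.lt_succ_self k
  have hL := Lagrange.eq_interpolate hinj hdeg
  have hP : ∑ i ∈ Finset.range (k+1), Polynomial.C (c i) * p i =
      (Polynomial.X - Polynomial.C t : Polynomial ℝ) ^ k := by
    conv_rhs => rw [hL]
    rw [Lagrange.interpolate_apply]
    refine Finset.sum_congr rfl fun i hi => ?_
    have hik : i < k + 1 := Finset.mem_range.1 hi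
    have hcardi : ((Finset.range (k+1)).erase i).card = k := by
      rw [Finset.card_erase_of_mem hi, Finset.card_range]
      omega
    simp only [Lagrange.basis, Lagrange.basisDivisor]
    simp only [Finset.prod_mul_distrib]
    have hCprod : (∏ l ∈ (Finset.range (k+1)).erase i, Polynomial.C ((ts i - ts l)⁻¹)) =
        Polynomial.C (∏ l ∈ (Finset.range (k+1)).erase i, (ts i - ts l)⁻¹) :=
      (map_prod (Polynomial.C : ℝ →+* Polynomial ℝ) _ _).symm
    rw [hCprod, ← mul_assoc, ← Polynomial.C_mul, hp]
    congr 1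
    rw [Polynomial.eval_pow, Polynomial.eval_sub, Polynomial.eval_X, Polynomial.eval_C]
    have h1 : (ts i - t) ^ k = (-1) ^ k * (t - ts i) ^ k := by
      rw [show ts i - t = -(t - ts i) by ring, neg_pow]
    have h2 : ∏ l ∈ (Finset.range (k+1)).erase i, (ts l - ts i) =
        (-1) ^ k * ∏ l ∈ (Finset.range (k+1)).erase i, (ts i - ts l) := by
      rw [prod_neg_sub (fun l => ts l) (fun _ => ts i), hcardi]
    have hneI : ∏ l ∈ (Finset.range (k+1)).erase i, (ts i - ts l) ≠ 0 := by
      refine Finset.prod_ne_zero_iff.2 fun l hl => ?_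
      have hl' := Finset.mem_erase.1 hl
      exact sub_ne_zero_of_ne (hts i l (by omega)
        (by have := Finset.mem_range.1 hl'.2; omega) (Ne.symm hl'.1))
    rw [h1]
    congr 1
    show (t - ts i) ^ k / ∏ l ∈ (Finset.range (k+1)).erase i, (ts l - ts i) =
        (-1) ^ k * (t - ts i) ^ k * ∏ l ∈ (Finset.range (k+1)).erase i, (ts i - ts l)⁻¹
    rw [h2, Finset.prod_inv_distrib, div_eq_mul_inv, mul_inv]
    have hm1 : ((-1 : ℝ) ^ k)⁻¹ = (-1) ^ k := by
      rw [← inv_pow]; norm_num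
    rw [hm1]
    ring
  rw [hP, Polynomial.iterate_derivative_X_sub_pow]
  simp only [Polynomial.eval_smul, Polynomial.eval_pow, Polynomial.eval_sub,
    Polynomial.eval_X, Polynomial.eval_C, sub_self, smul_eq_mul]
  rw [zero_pow (by omega : k - m ≠ 0)]
  ring
end
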